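/- Let z : [1, ∞) → Δ(A) be absolutely continuous with ż(t) = (1/t)(q̄(t) − z(t)) for a.e. t, where q̄(t) = q_1(t) ⊗ q_2(t) and q_1(t) ∈ Δ(A_1) is a best reply of player 1 to z_2(t) (no assumption on q_2). Then player 1's maximal regret max_{k} u_1(k, z_2(t)) − u_1(z(t)) converges to 0 as t → ∞. -/

import Mathlib

/-!
Write `A_k(t) = t u₁(k, z₂(t))` and `B(t) = t u₁(z(t))`. Since `d(t z)/dt = q₁ ⊗ q₂`, both are
absolutely continuous with `A_k' = u₁(k, q₂)` and `B' = u₁(q₁ ⊗ q₂)`. Wherever the envelope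
`max_k A_k` is differentiable (almost everywhere) its derivative is `A_k'` for every maximizer `k`,
and `q₁(t)` charges only maximizers, so it equals `∑_k q₁(t)_k u₁(k, q₂(t)) = B'`. Hence
`t · regret(t) = max_k A_k - B` is constant: `regret(t) = regret(1) / t`.
-/

open Finset MeasureTheory Filter Set intervalIntegral

theorem AbsolutelyContinuousOnInterval.finset_sup' {ι : Type*} {s : Finset ι} (hs : s.Nonempty)
    {f : ι → ℝ → ℝ} {a b : ℝ} (hf : ∀ i ∈ s, AbsolutelyContinuousOnInterval (f i) a b) :
    AbsolutelyContinuousOnInterval (fun x => s.sup' hs fun i => f i x) a b := by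
  have hdist : ∀ x y, dist (s.sup' hs fun i => f i x) (s.sup' hs fun i => f i y)
      ≤ ∑ i ∈ s, dist (f i x) (f i y) := by
    have hle : ∀ x y, (s.sup' hs fun i => f i x)
        ≤ (s.sup' hs fun i => f i y) + ∑ i ∈ s, dist (f i x) (f i y) := by
      intro x y
      refine sup'_le _ _ fun i hi => ?_
      have hi_le := le_sup' (fun i => f i y) hi
      have hi_dist := single_le_sum (f := fun i => dist (f i x) (f i y))
        (fun i _ => dist_nonneg) hi
      have hdiff : f i x - f i y ≤ dist (f i x) (f i y) := by
        rw [Real.dist_eq]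
        exact le_abs_self _
      linarith
    intro x y
    rw [Real.dist_eq, abs_sub_le_iff]
    constructor
    · linarith [hle x y]
    · simp_rw [dist_comm (f _ x)]
      linarith [hle y x]
  unfold AbsolutelyContinuousOnInterval at *
  apply squeeze_zero (fun _ => sum_nonneg fun _ _ => dist_nonneg)
    (fun E => sum_le_sum fun k _ => hdist _ _)
  rw [← show ∑ i ∈ s, (0 : ℝ) = 0 from sum_const_zero]
  simp_rw [sum_comm (s := Finset.range _)]
  exact tendsto_finsetSum s hf

theorem hasDerivAt_sup'_of_sum_mul_eq {ι : Type*} [Fintype ι] [Nonempty ι] {f : ι → ℝ → ℝ}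
    {f' : ι → ℝ} {x : ℝ} (hf : ∀ i, HasDerivAt (f i) (f' i) x)
    (hM : DifferentiableAt ℝ (fun t => univ.sup' univ_nonempty fun i => f i t) x)
    {p : ι → ℝ} (hp0 : ∀ i, 0 ≤ p i) (hp1 : ∑ i, p i = 1)
    (hp : ∑ i, p i * f i x = univ.sup' univ_nonempty fun i => f i x) :
    HasDerivAt (fun t => univ.sup' univ_nonempty fun i => f i t) (∑ i, p i * f' i) x := by
  set M := fun t => univ.sup' univ_nonempty fun i => f i t
  have hle : ∀ i t, f i t ≤ M t := fun i t => le_sup' (fun i => f i t) (mem_univ i)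
  have hmax : ∀ i, p i ≠ 0 → f i x = M x := by
    have hgap : ∑ i, p i * (M x - f i x) = 0 := by
      simp only [mul_sub, sum_sub_distrib, ← sum_mul, hp1, one_mul]
      exact sub_eq_zero.2 hp.symm
    intro i hi
    have := (sum_eq_zero_iff_of_nonneg fun j _ => mul_nonneg (hp0 j)
      (sub_nonneg.2 (hle j x))).1 hgap i (mem_univ i)
    linarith [(mul_eq_zero.1 this).resolve_left hi]
  have hderiv : ∀ i, p i ≠ 0 → f' i = deriv M x := by
    intro i hi
    have hmin : IsLocalMin (fun t => M t - f i t) x :=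
      Eventually.of_forall fun t => by simp only [hmax i hi, sub_self, sub_nonneg, hle]
    linarith [hmin.hasDerivAt_eq_zero (hM.hasDerivAt.sub (hf i))]
  have hsum : ∑ i, p i * f' i = deriv M x := by
    calc ∑ i, p i * f' i = ∑ i, p i * deriv M x := sum_congr rfl fun i _ => by
          rcases eq_or_ne (p i) 0 with h | h
          · simp [h]
          · rw [hderiv i h]
      _ = deriv M x := by rw [← sum_mul, hp1, one_mul]
  exact hsum ▸ hM.hasDerivAt

theorem sup'_add_integral_sub_integral_eq_of_sum_mul_eq {ι : Type*} [Fintype ι] [Nonempty ι]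
    {a b : ℝ} (c : ι → ℝ) {e : ι → ℝ → ℝ} (he : ∀ i, IntervalIntegrable (e i) volume a b)
    {h : ℝ → ℝ} (hh : IntervalIntegrable h volume a b) {p : ℝ → ι → ℝ}
    (hp0 : ∀ s ∈ uIcc a b, ∀ i, 0 ≤ p s i) (hp1 : ∀ s ∈ uIcc a b, ∑ i, p s i = 1)
    (hp : ∀ s ∈ uIcc a b, ∑ i, p s i * (c i + ∫ u in a..s, e i u)
      = univ.sup' univ_nonempty fun i => c i + ∫ u in a..s, e i u)
    (hhe : ∀ s ∈ uIcc a b, h s = ∑ i, p s i * e i s) :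
    ∀ t ∈ uIcc a b, (univ.sup' univ_nonempty fun i => c i + ∫ u in a..t, e i u)
      - ∫ u in a..t, h u = univ.sup' univ_nonempty c := by
  set F : ι → ℝ → ℝ := fun i t => c i + ∫ u in a..t, e i u
  have hF : ∀ i, AbsolutelyContinuousOnInterval (F i) a b := fun i =>
    (LipschitzWith.const (c i)).lipschitzOnWith.absolutelyContinuousOnInterval.fun_add
      ((he i).absolutelyContinuousOnInterval_intervalIntegral left_mem_uIcc)
  have hM := AbsolutelyContinuousOnInterval.finset_sup' univ_nonempty fun i _ => hF i
  have hD := hM.fun_sub (hh.absolutelyContinuousOnInterval_intervalIntegral left_mem_uIcc)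
  have hD' : ∀ᵐ x, x ∈ uIcc a b → HasDerivAt
      (fun t => (univ.sup' univ_nonempty fun i => F i t) - ∫ u in a..t, h u) 0 x := by
    filter_upwards [hM.ae_differentiableAt, ae_all_iff.2 fun i => (he i).ae_hasDerivAt_integral,
      hh.ae_hasDerivAt_integral] with x hMx hex hhx hx
    have hFx i : HasDerivAt (F i) (e i x) x := (hex i hx a left_mem_uIcc).const_add (c i)
    have := (hasDerivAt_sup'_of_sum_mul_eq hFx (hMx hx) (hp0 x hx) (hp1 x hx) (hp x hx)).sub
      (hhx hx a left_mem_uIcc)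
    rwa [← hhe x hx, sub_self] at this
  obtain ⟨C, hC⟩ := hD.const_of_ae_hasDerivAt_zero hD'
  intro t ht
  rw [hC t ht, ← hC a left_mem_uIcc]
  simp [F]

theorem mul_eq_add_integral_of_eq_add_integral {g z : ℝ → ℝ} {a t : ℝ}
    (hg : IntervalIntegrable g volume a t) (hz : ∀ s ∈ uIcc a t, z s = z a + ∫ u in a..s, g u) :
    t * z t = a * z a + ∫ s in a..t, (z s + s * g s) := by
  set F : ℝ → ℝ := fun s => z a + ∫ u in a..s, g u
  have hF : AbsolutelyContinuousOnInterval F a t :=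
    (LipschitzWith.const (z a)).lipschitzOnWith.absolutelyContinuousOnInterval.fun_add
      (hg.absolutelyContinuousOnInterval_intervalIntegral left_mem_uIcc)
  have hid : AbsolutelyContinuousOnInterval (fun s : ℝ => s) a t :=
    LipschitzWith.id.lipschitzOnWith.absolutelyContinuousOnInterval
  have hparts := hid.integral_deriv_mul_eq_sub hF
  have hcongr : ∫ s in a..t, (z s + s * g s)
      = ∫ s in a..t, (deriv (fun s : ℝ => s) s * F s + s * deriv F s) := by
    refine integral_congr_ae ?_
    filter_upwards [hg.ae_hasDerivAt_integral] with s hs hsI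
    have hsI' := uIoc_subset_uIcc hsI
    rw [deriv_id'', one_mul, ((hs hsI' a left_mem_uIcc).const_add (z a)).deriv, hz s hsI']
  rw [hcongr, hparts, show F t = z t from (hz t right_mem_uIcc).symm]
  simp [F]

theorem intervalIntegrable_add_mul_of_eq_add_integral {g z : ℝ → ℝ} {a t : ℝ}
    (hg : IntervalIntegrable g volume a t) (hz : ∀ s ∈ uIcc a t, z s = z a + ∫ u in a..s, g u) :
    IntervalIntegrable (fun s => z s + s * g s) volume a t := by
  have hzc : ContinuousOn z (uIcc a t) :=
    (continuousOn_const.add (hg.absolutelyContinuousOnInterval_intervalIntegral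
      left_mem_uIcc).continuousOn).congr hz
  exact hzc.intervalIntegrable.add (hg.continuousOn_mul continuousOn_id)

theorem intervalIntegrable_and_mul_eq_add_integral_of_fictitiousPlay {q z : ℝ → ℝ} {a t : ℝ}
    (ha : 0 < a) (hat : a ≤ t)
    (hg : IntervalIntegrable (fun s => (1 / s) * (q s - z s)) volume a t)
    (hz : ∀ s ∈ Icc a t, z s = z a + ∫ u in a..s, (1 / u) * (q u - z u)) :
    IntervalIntegrable q volume a t ∧ t * z t = a * z a + ∫ s in a..t, q s := by
  rw [← uIcc_of_le hat] at hz
  have hq : EqOn (fun s => z s + s * ((1 / s) * (q s - z s))) q (uIcc a t) := fun s hs => by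
    have : s ≠ 0 := by rw [uIcc_of_le hat] at hs; linarith [hs.1]
    field_simp
    ring
  refine ⟨(intervalIntegrable_add_mul_of_eq_add_integral hg hz).congr
    (hq.mono uIoc_subset_uIcc), ?_⟩
  rw [mul_eq_add_integral_of_eq_add_integral hg hz, integral_congr hq]

section Game

variable {A1 A2 : Type*} [Fintype A1] [Fintype A2]

/-- `u₁(k, x₂)`: the payoff of `k` against the `A2`-marginal of a joint profile `x`. -/
noncomputable def marginalPayoff (u1 : A1 → A2 → ℝ) (x : A1 → A2 → ℝ) (k : A1) : ℝ :=
  ∑ b, (∑ a, x a b) * u1 k b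

noncomputable def payoff (u1 : A1 → A2 → ℝ) (x : A1 → A2 → ℝ) : ℝ :=
  ∑ a, ∑ b, x a b * u1 a b

noncomputable def regret [Nonempty A1] (u1 : A1 → A2 → ℝ) (x : A1 → A2 → ℝ) : ℝ :=
  univ.sup' univ_nonempty (marginalPayoff u1 x) - payoff u1 x

theorem marginalPayoff_eq_sum_sum (u1 : A1 → A2 → ℝ) (x : A1 → A2 → ℝ) (k : A1) :
    marginalPayoff u1 x k = ∑ a, ∑ b, x a b * u1 k b := by
  simp only [marginalPayoff, sum_mul]
  exact sum_comm

variable {z : ℝ → A1 → A2 → ℝ} {q1 : ℝ → A1 → ℝ} {q2 : ℝ → A2 → ℝ}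

theorem intervalIntegrable_and_mul_sum_eq_add_integral_sum
    (hint : ∀ a b, ∀ t ≥ (1:ℝ), IntervalIntegrable
      (fun s => (1 / s) * (q1 s a * q2 s b - z s a b)) volume 1 t)
    (hsol : ∀ t ≥ (1:ℝ), ∀ a b,
      z t a b = z 1 a b + ∫ s in (1:ℝ)..t, (1 / s) * (q1 s a * q2 s b - z s a b))
    (w : A1 → A2 → ℝ) {t : ℝ} (ht : 1 ≤ t) :
    IntervalIntegrable (fun s => ∑ a, ∑ b, q1 s a * q2 s b * w a b) volume 1 t ∧
      t * ∑ a, ∑ b, z t a b * w a b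
        = ∑ a, ∑ b, z 1 a b * w a b + ∫ s in (1:ℝ)..t, ∑ a, ∑ b, q1 s a * q2 s b * w a b := by
  have hent a b := intervalIntegrable_and_mul_eq_add_integral_of_fictitiousPlay one_pos ht
    (hint a b t ht) fun s hs => hsol s hs.1 a b
  have hterm a b : IntervalIntegrable (fun s => q1 s a * q2 s b * w a b) volume 1 t :=
    (hent a b).1.mul_const _
  have hrow a : IntervalIntegrable (fun s => ∑ b, q1 s a * q2 s b * w a b) volume 1 t := by
    simpa only [sum_fn] using IntervalIntegrable.sum univ fun b _ => hterm a b
  refine ⟨by simpa only [sum_fn] using IntervalIntegrable.sum univ fun a _ => hrow a, ?_⟩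
  rw [integral_finsetSum fun a _ => hrow a]
  simp only [integral_finsetSum fun b _ => hterm _ b, intervalIntegral.integral_mul_const, mul_sum,
    ← sum_add_distrib, ← mul_assoc, (hent _ _).2, one_mul, add_mul]

theorem mul_regret_eq_regret_one [Nonempty A1] (u1 : A1 → A2 → ℝ)
    (hq1prob : ∀ t ≥ (1:ℝ), (∀ a, 0 ≤ q1 t a) ∧ ∑ a, q1 t a = 1)
    (hbr1 : ∀ t ≥ (1:ℝ), ∑ a, q1 t a * marginalPayoff u1 (z t) a
        = univ.sup' univ_nonempty (marginalPayoff u1 (z t)))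
    (hint : ∀ a b, ∀ t ≥ (1:ℝ), IntervalIntegrable
      (fun s => (1 / s) * (q1 s a * q2 s b - z s a b)) volume 1 t)
    (hsol : ∀ t ≥ (1:ℝ), ∀ a b,
      z t a b = z 1 a b + ∫ s in (1:ℝ)..t, (1 / s) * (q1 s a * q2 s b - z s a b))
    {t : ℝ} (ht : 1 ≤ t) :
    t * regret u1 (z t) = regret u1 (z 1) := by
  set e : A1 → ℝ → ℝ := fun k s => marginalPayoff u1 (fun a b => q1 s a * q2 s b) k
  have hflow w {s : ℝ} (hs : 1 ≤ s) :=
    intervalIntegrable_and_mul_sum_eq_add_integral_sum hint hsol w hs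
  have he k : IntervalIntegrable (e k) volume 1 t := by
    simpa only [e, marginalPayoff_eq_sum_sum] using (hflow (fun _ b => u1 k b) ht).1
  have hA k {s : ℝ} (hs : 1 ≤ s) :
      marginalPayoff u1 (z 1) k + ∫ u in (1:ℝ)..s, e k u = s * marginalPayoff u1 (z s) k := by
    simpa only [e, marginalPayoff_eq_sum_sum] using (hflow (fun _ b => u1 k b) hs).2.symm
  have hmem : ∀ s ∈ uIcc 1 t, 1 ≤ s := fun s hs => (uIcc_of_le ht ▸ hs).1
  have henv := sup'_add_integral_sub_integral_eq_of_sum_mul_eq (marginalPayoff u1 (z 1)) he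
    (hflow u1 ht).1 (fun s hs => (hq1prob s (hmem s hs)).1)
    (fun s hs => (hq1prob s (hmem s hs)).2) ?_ ?_ t right_mem_uIcc
  · rw [regret, regret, payoff, payoff, mul_sub, mul₀_sup' (by linarith), (hflow u1 ht).2,
      ← henv]
    simp only [hA _ ht]
    ring
  · intro s hs
    simp only [hA _ (hmem s hs)]
    rw [← mul₀_sup' (zero_le_one.trans (hmem s hs)), ← hbr1 s (hmem s hs), mul_sum]
    exact sum_congr rfl fun a _ => mul_left_comm _ _ _
  · intro s hs
    simp only [e, marginalPayoff, ← sum_mul, (hq1prob s (hmem s hs)).2, one_mul, mul_sum,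
      mul_assoc]

end Game

theorem stmt_10_general {A1 A2 : Type*} [Fintype A1] [Fintype A2] [Nonempty A1]
    (u1 : A1 → A2 → ℝ)
    (z : ℝ → A1 → A2 → ℝ) (q1 : ℝ → A1 → ℝ) (q2 : ℝ → A2 → ℝ)
    (hq1prob : ∀ t ≥ (1:ℝ), (∀ a, 0 ≤ q1 t a) ∧ ∑ a, q1 t a = 1)
    -- q1(t) is a mixed best reply of player 1 to the marginal z₂(t); nothing is assumed on q₂
    (hbr1 : ∀ t ≥ (1:ℝ), ∑ a, q1 t a * (∑ b, (∑ a', z t a' b) * u1 a b)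
        = Finset.univ.sup' Finset.univ_nonempty (fun k => ∑ b, (∑ a', z t a' b) * u1 k b))
    -- absolutely continuous solution of ż(t) = (1/t)(q₁(t) ⊗ q₂(t) − z(t)), integral form
    (hint : ∀ a b, ∀ t ≥ (1:ℝ), IntervalIntegrable
      (fun s => (1 / s) * (q1 s a * q2 s b - z s a b)) volume 1 t)
    (hsol : ∀ t ≥ (1:ℝ), ∀ a b,
      z t a b = z 1 a b + ∫ s in (1:ℝ)..t, (1 / s) * (q1 s a * q2 s b - z s a b)) :
    Tendsto (fun t =>
      Finset.univ.sup' Finset.univ_nonempty (fun k => ∑ b, (∑ a', z t a' b) * u1 k b)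
        - ∑ a, ∑ b, z t a b * u1 a b) atTop (nhds 0) := by
  have hdecay : ∀ᶠ t in atTop, regret u1 (z 1) / t = regret u1 (z t) := by
    filter_upwards [eventually_ge_atTop 1] with t ht
    rw [← mul_regret_eq_regret_one u1 hq1prob hbr1 hint hsol ht,
      mul_div_cancel_left₀ _ (by positivity)]
  exact (tendsto_const_nhds.div_atTop tendsto_id).congr' hdecay

/-- unilateral no-regret property of continuous fictitious play: if only player 1
plays best replies (no assumption on q₂), player 1's maximal regret converges to 0. -/
theorem stmt_10 {A1 A2 : Type*} [Fintype A1] [Fintype A2] [Nonempty A1] [Nonempty A2]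
    (u1 : A1 → A2 → ℝ)
    (z : ℝ → A1 → A2 → ℝ) (q1 : ℝ → A1 → ℝ) (q2 : ℝ → A2 → ℝ)
    (hz : ∀ t ≥ (1:ℝ), (∀ a b, 0 ≤ z t a b) ∧ ∑ a, ∑ b, z t a b = 1)
    (hq1prob : ∀ t ≥ (1:ℝ), (∀ a, 0 ≤ q1 t a) ∧ ∑ a, q1 t a = 1)
    (hq2prob : ∀ t ≥ (1:ℝ), (∀ b, 0 ≤ q2 t b) ∧ ∑ b, q2 t b = 1)
    -- q1(t) is a mixed best reply of player 1 to the marginal z₂(t); nothing is assumed on q₂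
    (hbr1 : ∀ t ≥ (1:ℝ), ∑ a, q1 t a * (∑ b, (∑ a', z t a' b) * u1 a b)
        = Finset.univ.sup' Finset.univ_nonempty (fun k => ∑ b, (∑ a', z t a' b) * u1 k b))
    -- absolutely continuous solution of ż(t) = (1/t)(q₁(t) ⊗ q₂(t) − z(t)), integral form
    (hint : ∀ a b, ∀ t ≥ (1:ℝ), IntervalIntegrable
      (fun s => (1 / s) * (q1 s a * q2 s b - z s a b)) volume 1 t)
    (hsol : ∀ t ≥ (1:ℝ), ∀ a b,
      z t a b = z 1 a b + ∫ s in (1:ℝ)..t, (1 / s) * (q1 s a * q2 s b - z s a b)) :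
    Tendsto (fun t =>
      Finset.univ.sup' Finset.univ_nonempty (fun k => ∑ b, (∑ a', z t a' b) * u1 k b)
        - ∑ a, ∑ b, z t a b * u1 a b) atTop (nhds 0) :=
  stmt_10_general u1 z q1 q2 hq1prob hbr1 hint hsol
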